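/- Let $Z$ be exponentially distributed with mean $\mu > 0$ and let $p_p, N_0 > 0$. Then $\mathbb{E}[\ln(p_p Z + N_0)] = \ln(N_0) - \exp\left(\frac{N_0}{p_p \mu}\right)\mathrm{Ei}\left(-\frac{N_0}{p_p \mu}\right)$, where $\mathrm{Ei}$ denotes the exponential integral function. -/

import Mathlib

open MeasureTheory ProbabilityTheory Real

/-- The exponential integral function `Ei x = -∫_{-x}^∞ e^{-t}/t dt` (for `x < 0`). -/
noncomputable def expIntegralEi (x : ℝ) : ℝ := -∫ t in Set.Ioi (-x), Real.exp (-t) / t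

/-!
Integrating by parts against the density `r e^{-rz}` of `Exp(r)` (the boundary term at infinity
vanishes since `log` grows sublinearly) gives
`𝔼[log (pZ + N)] = log N + ∫₀^∞ e^{-rz} p / (pz + N) dz`, and the substitution
`t = rz + a` with `a = rN/p` turns the last integral into `e^a ∫_a^∞ e^{-t}/t dt = -e^a Ei(-a)`.
For mean `μ` the rate is `r = 1/μ`, so `a = N/(pμ)`.
-/

open Set Filter Topology

section LogMoment

variable {r p N : ℝ}

lemma abs_log_mul_add_le (hp : 0 < p) (hN : 0 < N) {z : ℝ} (hz : 0 ≤ z) :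
    |log (p * z + N)| ≤ |log N| + p / N * z := by
  have hpos : 0 < p * z + N := by positivity
  have hlower : log N ≤ log (p * z + N) := log_le_log hN (by nlinarith)
  have hupper : log (p * z + N) - log N ≤ p / N * z := by
    rw [← log_div hpos.ne' hN.ne']
    calc log ((p * z + N) / N) ≤ (p * z + N) / N - 1 := log_le_sub_one_of_pos (by positivity)
      _ = p / N * z := by field_simp; ring
  rw [abs_le]
  constructor <;> linarith [neg_abs_le (log N), le_abs_self (log N), div_pos hp hN,
    mul_nonneg (div_pos hp hN).le hz]

lemma integrableOn_exp_neg_mul (hr : 0 < r) : IntegrableOn (fun z ↦ exp (-(r * z))) (Ioi 0) := by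
  simpa [neg_mul] using exp_neg_integrableOn_Ioi 0 hr

lemma integrableOn_exp_neg_mul_mul_log (hr : 0 < r) (hp : 0 < p) (hN : 0 < N) :
    IntegrableOn (fun z ↦ exp (-(r * z)) * log (p * z + N)) (Ioi 0) := by
  have hexp := integrableOn_exp_neg_mul hr
  have hmul : IntegrableOn (fun z ↦ z * exp (-(r * z))) (Ioi 0) := by
    simpa [neg_mul] using integrableOn_rpow_mul_exp_neg_mul_rpow (p := 1) (s := 1) (b := r)
      (by norm_num) zero_lt_one hr
  refine ((hexp.const_mul |log N|).add (hmul.const_mul (p / N))).mono' (by fun_prop) ?_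
  filter_upwards [ae_restrict_mem measurableSet_Ioi] with z hz
  rw [norm_mul, norm_of_nonneg (exp_pos _).le, Real.norm_eq_abs]
  calc exp (-(r * z)) * |log (p * z + N)| ≤ exp (-(r * z)) * (|log N| + p / N * z) :=
        mul_le_mul_of_nonneg_left (abs_log_mul_add_le hp hN (le_of_lt hz)) (exp_pos _).le
    _ = _ := by simp only [Pi.add_apply]; ring

lemma integrableOn_exp_neg_mul_mul_div (hr : 0 < r) (hp : 0 < p) (hN : 0 < N) :
    IntegrableOn (fun z ↦ exp (-(r * z)) * (p / (p * z + N))) (Ioi 0) := by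
  refine ((integrableOn_exp_neg_mul hr).mul_const (p / N)).mono' (by fun_prop) ?_
  filter_upwards [ae_restrict_mem measurableSet_Ioi] with z (hz : 0 < z)
  have hpos : 0 < p * z + N := by positivity
  rw [norm_mul, norm_of_nonneg (exp_pos _).le, norm_of_nonneg (by positivity)]
  gcongr
  nlinarith

lemma tendsto_exp_neg_mul_mul_log_atTop (hr : 0 < r) (hp : 0 < p) (hN : 0 < N) :
    Tendsto (fun z ↦ exp (-(r * z)) * log (p * z + N)) atTop (𝓝 0) := by
  have hrz : Tendsto (r * ·) atTop atTop := tendsto_id.const_mul_atTop hr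
  have hexp : Tendsto (fun z ↦ exp (-(r * z))) atTop (𝓝 0) :=
    tendsto_exp_neg_atTop_nhds_zero.comp hrz
  have hmul : Tendsto (fun z ↦ r * z * exp (-(r * z))) atTop (𝓝 0) := by
    simpa [Function.comp_def] using (tendsto_pow_mul_exp_neg_atTop_nhds_zero 1).comp hrz
  have hbound := (hexp.const_mul |log N|).add (hmul.const_mul (p / N / r))
  rw [mul_zero, mul_zero, add_zero] at hbound
  refine squeeze_zero_norm' ?_ hbound
  filter_upwards [eventually_ge_atTop 0] with z hz
  rw [norm_mul, norm_of_nonneg (exp_pos _).le, Real.norm_eq_abs]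
  calc exp (-(r * z)) * |log (p * z + N)| ≤ exp (-(r * z)) * (|log N| + p / N * z) :=
        mul_le_mul_of_nonneg_left (abs_log_mul_add_le hp hN hz) (exp_pos _).le
    _ = _ := by field_simp

lemma hasDerivAt_exp_neg_mul_mul_log (hp : 0 < p) (hN : 0 < N) {z : ℝ} (hz : 0 ≤ z) :
    HasDerivAt (fun z ↦ -(exp (-(r * z)) * log (p * z + N)))
      (r * (exp (-(r * z)) * log (p * z + N)) - exp (-(r * z)) * (p / (p * z + N))) z := by
  have hpos : 0 < p * z + N := by positivity
  have hexp : HasDerivAt (fun z ↦ exp (-(r * z))) (exp (-(r * z)) * -(r * 1)) z :=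
    ((hasDerivAt_id z).const_mul r).neg.exp
  have hlog : HasDerivAt (fun z ↦ log (p * z + N)) (p * 1 / (p * z + N)) z :=
    (((hasDerivAt_id z).const_mul p).add_const N).log hpos.ne'
  exact (hexp.mul hlog).neg.congr_deriv (by ring)

lemma integral_mul_exp_neg_mul_mul_log (hr : 0 < r) (hp : 0 < p) (hN : 0 < N) :
    ∫ z in Ioi 0, r * (exp (-(r * z)) * log (p * z + N))
      = log N + ∫ z in Ioi 0, exp (-(r * z)) * (p / (p * z + N)) := by
  have hint1 := (integrableOn_exp_neg_mul_mul_log hr hp hN).const_mul r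
  have hint2 := integrableOn_exp_neg_mul_mul_div hr hp hN
  have hparts := integral_Ioi_of_hasDerivAt_of_tendsto' (a := 0)
    (fun z hz ↦ hasDerivAt_exp_neg_mul_mul_log hp hN hz) (hint1.sub hint2)
    (tendsto_exp_neg_mul_mul_log_atTop hr hp hN).neg
  rw [integral_sub hint1 hint2] at hparts
  simp only [mul_zero, neg_zero, exp_zero, one_mul, zero_add, sub_neg_eq_add] at hparts
  linarith

end LogMoment

lemma integral_Ioi_comp_mul_add {E : Type*} [NormedAddCommGroup E] [NormedSpace ℝ E]
    (g : ℝ → E) {r : ℝ} (hr : 0 < r) (a : ℝ) :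
    ∫ z in Ioi 0, g (r * z + a) = r⁻¹ • ∫ t in Ioi a, g t := by
  have hshift : ∫ u in Ioi 0, g (u + a) = ∫ t in Ioi a, g t := by
    simpa using (measurePreserving_add_right volume a).setIntegral_preimage_emb
      (MeasurableEquiv.addRight a).measurableEmbedding g (Ioi a)
  rw [← hshift]
  simpa using integral_comp_mul_left_Ioi (fun u ↦ g (u + a)) 0 hr

lemma integral_exp_neg_mul_mul_div_mul_add {r : ℝ} (hr : 0 < r) (a : ℝ) :
    ∫ z in Ioi 0, exp (-(r * z)) * (r / (r * z + a)) = -(exp a * expIntegralEi (-a)) := by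
  have hpointwise : ∀ z, exp (-(r * z)) * (r / (r * z + a))
      = r * (exp a * (exp (-(r * z + a)) / (r * z + a))) := by
    intro z
    rw [neg_add, exp_add, exp_neg a]
    field_simp
  rw [expIntegralEi, neg_neg, mul_neg, neg_neg, funext hpointwise, integral_const_mul,
    integral_Ioi_comp_mul_add (fun t ↦ exp a * (exp (-t) / t)) hr, integral_const_mul,
    smul_eq_mul, mul_inv_cancel_left₀ hr.ne']

lemma integral_expMeasure {E : Type*} [NormedAddCommGroup E] [NormedSpace ℝ E]
    {r : ℝ} (hr : 0 ≤ r) (g : ℝ → E) :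
    ∫ x, g x ∂expMeasure r = ∫ x in Ioi 0, (r * exp (-(r * x))) • g x := by
  have hdensity : expMeasure r = volume.withDensity (exponentialPDF r) := rfl
  have hmeas : Measurable (exponentialPDF r) := (measurable_exponentialPDFReal r).ennreal_ofReal
  rw [hdensity, integral_withDensity_eq_integral_toReal_smul hmeas
      (.of_forall fun _ ↦ ENNReal.ofReal_lt_top),
    ← setIntegral_eq_integral_of_forall_compl_eq_zero (s := Ici 0), integral_Ici_eq_integral_Ioi]
  · refine setIntegral_congr_fun measurableSet_Ioi fun x (hx : 0 < x) ↦ ?_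
    rw [exponentialPDF_of_nonneg hx.le, ENNReal.toReal_ofReal (by positivity)]
  · intro x (hx : ¬ 0 ≤ x)
    rw [exponentialPDF_of_neg (not_le.mp hx), ENNReal.toReal_zero, zero_smul]

lemma integral_log_mul_add_expMeasure {r p N : ℝ} (hr : 0 < r) (hp : 0 < p) (hN : 0 < N) :
    ∫ z, log (p * z + N) ∂expMeasure r
      = log N - exp (r * N / p) * expIntegralEi (-(r * N / p)) := by
  have hrate : ∀ z, p / (p * z + N) = r / (r * z + r * N / p) := by
    intro z
    have hscale : r * z + r * N / p = r / p * (p * z + N) := by field_simp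
    rw [hscale, div_mul_eq_div_div, div_div_cancel₀ hr.ne']
  rw [integral_expMeasure hr.le]
  simp only [smul_eq_mul, mul_assoc]
  rw [integral_mul_exp_neg_mul_mul_log hr hp hN]
  simp_rw [hrate]
  rw [integral_exp_neg_mul_mul_div_mul_add hr, sub_eq_add_neg]

theorem stmt_6_general {Ω : Type*} [MeasureSpace Ω]
    (Z : Ω → ℝ) (μ pp N0 : ℝ) (hμ : 0 < μ) (hpp : 0 < pp) (hN0 : 0 < N0)
    (hZd : Measure.map Z ℙ = expMeasure (1 / μ)) :
    ∫ ω, Real.log (pp * Z ω + N0) ∂ℙ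
      = Real.log N0
        - Real.exp (N0 / (pp * μ)) * expIntegralEi (-(N0 / (pp * μ))) := by
  have hr : 0 < 1 / μ := one_div_pos.mpr hμ
  have : IsProbabilityMeasure (expMeasure (1 / μ)) := isProbabilityMeasure_expMeasure hr
  have hZ : AEMeasurable Z ℙ := .of_map_ne_zero (hZd ▸ IsProbabilityMeasure.ne_zero _)
  have hrate : 1 / μ * N0 / pp = N0 / (pp * μ) := by field_simp
  calc ∫ ω, log (pp * Z ω + N0) ∂ℙ = ∫ z, log (pp * z + N0) ∂expMeasure (1 / μ) := by
        rw [← hZd, integral_map hZ (by fun_prop : Measurable _).aestronglyMeasurable]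
    _ = _ := by rw [integral_log_mul_add_expMeasure hr hpp hN0, hrate]

/-- For `Z` exponential with mean `μ` and constants `pp, N0 > 0`,
`𝔼[ln(pp Z + N0)] = ln N0 - e^{N0/(pp μ)} Ei(-N0/(pp μ))`. -/
theorem stmt_6 {Ω : Type*} [MeasureSpace Ω] [IsProbabilityMeasure (ℙ : Measure Ω)]
    (Z : Ω → ℝ) (μ pp N0 : ℝ) (hμ : 0 < μ) (hpp : 0 < pp) (hN0 : 0 < N0)
    (hZd : Measure.map Z ℙ = expMeasure (1 / μ)) :
    ∫ ω, Real.log (pp * Z ω + N0) ∂ℙ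
      = Real.log N0
        - Real.exp (N0 / (pp * μ)) * expIntegralEi (-(N0 / (pp * μ))) :=
  stmt_6_general Z μ pp N0 hμ hpp hN0 hZd
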